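/- If n_l < n_u, then for any two states s, s' in the search space S there exists a walk from s to s' lying entirely inside the search space graph whose length is exactly the Hamming distance HD(s, s'). -/

import Mathlib

/-- Hamming weight of a binary string: number of coordinates equal to `true`. -/
def HW {N : ℕ} (s : Fin N → Bool) : ℕ :=
  (Finset.univ.filter fun i => s i = true).card

/-- The search space: binary strings of length `N` with Hamming weight in `[nl, nu]`. -/
def searchSpace (N nl nu : ℕ) : Finset (Fin N → Bool) :=
  Finset.univ.filter fun s => nl ≤ HW s ∧ HW s ≤ nu

/-- The search space graph: vertices are the states in the search space, with an edge
between two states iff their Hamming distance is 1. -/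
def SearchGraph (N nl nu : ℕ) :
    SimpleGraph {s : Fin N → Bool // nl ≤ HW s ∧ HW s ≤ nu} where
  Adj s s' := hammingDist s.1 s'.1 = 1
  symm := ⟨fun s s' h => by simpa [hammingDist_comm] using h⟩
  loopless := ⟨fun s h => by simp at h⟩

/-!
Induct on the Hamming distance: it suffices to flip one coordinate in which `s` and `s'`
differ without leaving the weight window `[nl, nu]`. Flipping a `0` to a `1` is safe when
`HW s < nu`, flipping a `1` to a `0` when `nl < HW s`, and since `nl < nu` one of the two slacks
is available. If no differing coordinate points in the matching direction, then `s'` lies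
strictly below (resp. above) `s` pointwise, so by monotonicity of `HW` the other slack is
available and such a coordinate exists.
-/

open Function Finset

section hammingDist

variable {ι β : Type*} [Fintype ι] [DecidableEq ι] [DecidableEq β]

lemma hammingDist_update_self_eq_one {s t : ι → β} {i : ι} (h : s i ≠ t i) :
    hammingDist s (update s i (t i)) = 1 := by
  rw [hammingDist, card_eq_one]
  refine ⟨i, ?_⟩
  ext j
  rcases eq_or_ne j i with rfl | hj <;> simp [*]

lemma hammingDist_update_add_one {s t : ι → β} {i : ι} (h : s i ≠ t i) :
    hammingDist (update s i (t i)) t + 1 = hammingDist s t := by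
  have : ({j | update s i (t i) j ≠ t j} : Finset ι) =
      ({j | s j ≠ t j} : Finset ι).erase i := by
    ext j
    rcases eq_or_ne j i with rfl | hj <;> simp [*]
  rw [hammingDist, hammingDist, this, card_erase_add_one (by simpa)]

end hammingDist

variable {N : ℕ}

lemma HW_update_add_toNat (s : Fin N → Bool) (i : Fin N) (b : Bool) :
    HW (update s i b) + (s i).toNat = HW s + b.toNat := by
  simp only [HW, card_filter, ← add_sum_erase _ _ (mem_univ i)]
  rw [sum_congr rfl fun j hj => by rw [update_of_ne (ne_of_mem_erase hj)]]
  cases b <;> cases s i <;> simp <;> omega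

lemma HW_strictMono : StrictMono (HW (N := N)) := by
  intro s t hst
  obtain ⟨hle, i, hi⟩ := Pi.lt_def.mp hst
  rw [Bool.lt_iff] at hi
  refine card_lt_card ((ssubset_iff_of_subset ?_).mpr ⟨i, by simp [hi.2], by simp [hi.1]⟩)
  intro j
  simpa using Bool.le_iff_imp.mp (hle j)

lemma exists_ne_and_HW_update_bounds {nl nu : ℕ} (h : nl < nu) {s t : Fin N → Bool}
    (hs : nl ≤ HW s ∧ HW s ≤ nu) (ht : nl ≤ HW t ∧ HW t ≤ nu) (hne : s ≠ t) :
    ∃ i, s i ≠ t i ∧ nl ≤ HW (update s i (t i)) ∧ HW (update s i (t i)) ≤ nu := by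
  have flip (i) (hi : s i < t i ∧ HW s < nu ∨ t i < s i ∧ nl < HW s) :
      ∃ i, s i ≠ t i ∧ nl ≤ HW (update s i (t i)) ∧ HW (update s i (t i)) ≤ nu := by
    have := HW_update_add_toNat s i (t i)
    refine ⟨i, ?_⟩
    rcases hi with ⟨hi, hlt⟩ | ⟨hi, hlt⟩ <;> rw [Bool.lt_iff] at hi <;>
      simp only [hi, Bool.toNat_false, Bool.toNat_true, ne_eq, Bool.false_eq_true,
        Bool.true_eq_false, add_zero, not_false_eq_true, true_and] at this ⊢ <;> omega
  rcases lt_or_ge (HW s) nu with hlt | hge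
  · by_cases hts : t ≤ s
    · have hts' : t < s := lt_of_le_of_ne hts hne.symm
      obtain ⟨-, i, hi⟩ := Pi.lt_def.mp hts'
      exact flip i (.inr ⟨hi, ht.1.trans_lt (HW_strictMono hts')⟩)
    · obtain ⟨i, hi⟩ : ∃ i, s i < t i := by simpa [Pi.le_def] using hts
      exact flip i (.inl ⟨hi, hlt⟩)
  · by_cases hst : s ≤ t
    · have hst' : s < t := lt_of_le_of_ne hst hne
      obtain ⟨-, i, hi⟩ := Pi.lt_def.mp hst'
      exact flip i (.inl ⟨hi, (HW_strictMono hst').trans_le ht.2⟩)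
    · obtain ⟨i, hi⟩ : ∃ i, t i < s i := by simpa [Pi.le_def] using hst
      exact flip i (.inr ⟨hi, h.trans_le hge⟩)

theorem SimpleGraph.exists_walk_length_eq_of_exists_adj {V : Type*} (G : SimpleGraph V)
    (d : V → V → ℕ) (eq_of_eq_zero : ∀ u v, d u v = 0 → u = v)
    (exists_adj : ∀ u v, 0 < d u v → ∃ w, G.Adj u w ∧ d w v + 1 = d u v) (u v : V) :
    ∃ p : G.Walk u v, p.length = d u v := by
  induction hn : d u v generalizing u with
  | zero => exact ⟨.copy .nil rfl (eq_of_eq_zero u v hn), by simp⟩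
  | succ n ih =>
    obtain ⟨w, hadj, hw⟩ := exists_adj u v (by omega)
    obtain ⟨p, hp⟩ := ih w (by omega)
    exact ⟨.cons hadj p, by simp [hp]⟩

theorem exists_walk_length_eq_hammingDist_general (N nl nu : ℕ) (h1 : nl < nu)
    (s s' : {s : Fin N → Bool // nl ≤ HW s ∧ HW s ≤ nu}) :
    ∃ p : (SearchGraph N nl nu).Walk s s', p.length = hammingDist s.1 s'.1 := by
  refine (SearchGraph N nl nu).exists_walk_length_eq_of_exists_adj
    (fun u v => hammingDist u.1 v.1) (fun u v h => Subtype.ext (hammingDist_eq_zero.mp h)) ?_ s s'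
  intro u v huv
  obtain ⟨i, hi, hbounds⟩ := exists_ne_and_HW_update_bounds h1 u.2 v.2 (hammingDist_pos.mp huv)
  exact ⟨⟨update u.1 i (v.1 i), hbounds⟩, hammingDist_update_self_eq_one hi,
    hammingDist_update_add_one hi⟩

/-- If `n_l < n_u`, then any two states in the search space are joined by
a walk in the search space graph whose length is exactly their Hamming distance. -/
theorem exists_walk_length_eq_hammingDist (N nl nu : ℕ) (h1 : nl < nu) (h2 : nu ≤ N)
    (s s' : {s : Fin N → Bool // nl ≤ HW s ∧ HW s ≤ nu}) :
    ∃ p : (SearchGraph N nl nu).Walk s s', p.length = hammingDist s.1 s'.1 :=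
  exists_walk_length_eq_hammingDist_general N nl nu h1 s s'
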